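/- arXiv:2012.01429 — 8 statements merged into one kernel-verified Lean document; each statement's English description precedes it below -/
import Mathlib

section
/- Let n ≥ 1 and let N_{ij}^k (for i, j, k ∈ {0,…,n−1}) be nonnegative real numbers. Suppose there exist strictly positive real numbers d_0,…,d_{n−1} satisfying d_i·d_j = Σ_k N_{ij}^k·d_k for all i, j. For each i, let N_i denote the n×n matrix whose (j,k) entry is N_{ij}^k. Then for every i, every complex eigenvalue μ of N_i satisfies |μ| ≤ d_i. -/
/-!
The fusion rule says that `d` is a positive eigenvector of `N_i` with eigenvalue `d_i`, and a
positive vector `d` with `A d ≤ r d` bounds every eigenvalue of a nonnegative matrix `A` by `r`: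
choose `j` maximising `‖w k‖ / d k` and put `c = ‖w j‖ / d j`, so that `‖w k‖ ≤ c d k` for all `k`.
The `j`-th row of `A w = μ w` then gives
`|μ| ‖w j‖ ≤ ∑ₖ A_{jk} ‖w k‖ ≤ c ∑ₖ A_{jk} d k ≤ c r d j = r ‖w j‖`, and `‖w j‖ > 0`.
-/

open Finset Matrix

theorem Matrix.norm_le_of_mulVec_eq_smul_of_mulVec_le {ι : Type*} [Fintype ι]
    {A : Matrix ι ι ℝ} (hA : ∀ j k, 0 ≤ A j k) {d : ι → ℝ} (hd : ∀ k, 0 < d k) {r : ℝ}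
    (hdr : A *ᵥ d ≤ r • d) {μ : ℂ} {w : ι → ℂ} (hw : w ≠ 0)
    (hμ : A.map (↑) *ᵥ w = μ • w) : ‖μ‖ ≤ r := by
  obtain ⟨k₀, hk₀⟩ := Function.ne_iff.1 hw
  obtain ⟨j, -, hj⟩ := exists_max_image univ (fun k => ‖w k‖ / d k) ⟨k₀, mem_univ k₀⟩
  set c := ‖w j‖ / d j
  have hwk (k : ι) : ‖w k‖ ≤ c * d k := (div_le_iff₀ (hd k)).1 (hj k (mem_univ k))
  have hc : 0 < c := (div_pos (norm_pos_iff.2 hk₀) (hd k₀)).trans_le (hj k₀ (mem_univ k₀))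
  have hwj : ‖w j‖ = c * d j := (div_mul_cancel₀ _ (hd j).ne').symm
  have hrow : ∑ k, (A j k : ℂ) * w k = μ * w j := congrFun hμ j
  have hdj : ∑ k, A j k * d k ≤ r * d j := hdr j
  have key : ‖μ‖ * ‖w j‖ ≤ r * ‖w j‖ := calc
    ‖μ‖ * ‖w j‖ = ‖∑ k, (A j k : ℂ) * w k‖ := by rw [hrow, norm_mul]
    _ ≤ ∑ k, A j k * ‖w k‖ := (norm_sum_le _ _).trans_eq <| sum_congr rfl fun k _ => by
      rw [norm_mul, Complex.norm_real, Real.norm_of_nonneg (hA j k)]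
    _ ≤ ∑ k, A j k * (c * d k) := sum_le_sum fun k _ => mul_le_mul_of_nonneg_left (hwk k) (hA j k)
    _ = c * ∑ k, A j k * d k := by rw [mul_sum]; exact sum_congr rfl fun k _ => by ring
    _ ≤ c * (r * d j) := mul_le_mul_of_nonneg_left hdj hc.le
    _ = r * ‖w j‖ := by rw [hwj]; ring
  exact le_of_mul_le_mul_right key (hwj ▸ mul_pos hc (hd j))

theorem stmt_1_general (n : ℕ) (N : Fin n → Fin n → Fin n → ℝ)
    (hN : ∀ i j k, 0 ≤ N i j k)
    (d : Fin n → ℝ) (hd : ∀ i, 0 < d i)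
    (hfus : ∀ i j, d i * d j = ∑ k, N i j k * d k)
    (i : Fin n) (μ : ℂ) (w : Fin n → ℂ) (hw : w ≠ 0)
    (hμ : ((Matrix.of fun j k => N i j k).map (fun a => (a : ℂ))).mulVec w = μ • w) :
    ‖μ‖ ≤ d i :=
  norm_le_of_mulVec_eq_smul_of_mulVec_le (hN i) hd (fun j => (hfus i j).ge) hw hμ

/-- Spectral radius formula: if nonnegative fusion coefficients `N i j k` admit a solution
`d i > 0` of the abelianized fusion rule `d i * d j = ∑ k, N i j k * d k`, then every complex
eigenvalue of the regular-representation matrix `(N_i)_{jk} = N i j k` has absolute value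
at most `d i`. -/
theorem stmt_1 (n : ℕ) (hn : 1 ≤ n) (N : Fin n → Fin n → Fin n → ℝ)
    (hN : ∀ i j k, 0 ≤ N i j k)
    (d : Fin n → ℝ) (hd : ∀ i, 0 < d i)
    (hfus : ∀ i j, d i * d j = ∑ k, N i j k * d k)
    (i : Fin n) (μ : ℂ) (w : Fin n → ℂ) (hw : w ≠ 0)
    (hμ : ((Matrix.of fun j k => N i j k).map (fun a => (a : ℂ))).mulVec w = μ • w) :
    ‖μ‖ ≤ d i :=
  stmt_1_general n N hN d hd hfus i μ w hw hμ
end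

section
/- Let n ≥ 1 and let N_{ij}^k (for i, j, k ∈ {0,…,n−1}) be nonnegative real numbers, and let d_0,…,d_{n−1} be strictly positive real numbers satisfying d_i·d_j = Σ_k N_{ij}^k·d_k for all i, j. For each i, let N_i denote the n×n matrix with (j,k) entry N_{ij}^k, regarded as a complex matrix. If v ∈ ℂⁿ is a nonzero vector that is a simultaneous eigenvector of all the matrices N_i, say N_i·v = μ_i·v with μ_i ∈ ℂ, then for every i one has |⟨v, N_i·v⟩| ≤ d_i·⟨v, v⟩, where ⟨·,·⟩ denotes the standard Hermitian inner product on ℂⁿ. -/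
/-!
Since `d` is a positive eigenvector of the nonnegative matrix `N_i` (the fusion rule says
`N_i d = d_i d`), the Collatz–Wielandt argument bounds every eigenvalue of `N_i` in modulus by
`d_i`: at an index `j` maximising `|v_j| / d_j` the triangle inequality gives
`|μ| |v_j| ≤ ∑_k N_{ij}^k |v_k| ≤ (|v_j| / d_j) ∑_k N_{ij}^k d_k = d_i |v_j|`.
The matrix element itself is `⟨v, N_i v⟩ = μ_i ⟨v, v⟩`.
-/

open Matrix

namespace Matrix

variable {ι : Type*} [Fintype ι]

theorem norm_map_ofReal_mulVec_apply_le {A : Matrix ι ι ℝ} (hA : ∀ j k, 0 ≤ A j k)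
    (v : ι → ℂ) (j : ι) :
    ‖(A.map (fun a => (a : ℂ)) *ᵥ v) j‖ ≤ (A *ᵥ fun k => ‖v k‖) j :=
  calc ‖(A.map (fun a => (a : ℂ)) *ᵥ v) j‖ = ‖∑ k, (A j k : ℂ) * v k‖ := rfl
    _ ≤ ∑ k, ‖(A j k : ℂ) * v k‖ := norm_sum_le _ _
    _ = (A *ᵥ fun k => ‖v k‖) j := by
      simp only [norm_mul, Complex.norm_real, Real.norm_of_nonneg (hA j _)]
      rfl

theorem mulVec_apply_le_mulVec_apply {A : Matrix ι ι ℝ} (hA : ∀ j k, 0 ≤ A j k)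
    {x y : ι → ℝ} (hxy : x ≤ y) (j : ι) : (A *ᵥ x) j ≤ (A *ᵥ y) j :=
  Finset.sum_le_sum fun k _ => mul_le_mul_of_nonneg_left (hxy k) (hA j k)

theorem norm_eigenvalue_le_of_mulVec_le_smul {A : Matrix ι ι ℝ} (hA : ∀ j k, 0 ≤ A j k)
    {d : ι → ℝ} (hd : ∀ k, 0 < d k) {r : ℝ} (hAd : A *ᵥ d ≤ r • d)
    {v : ι → ℂ} (hv : v ≠ 0) {μ : ℂ} (heig : A.map (fun a => (a : ℂ)) *ᵥ v = μ • v) :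
    ‖μ‖ ≤ r := by
  obtain ⟨k₀, hk₀⟩ := Function.ne_iff.mp hv
  have : Nonempty ι := ⟨k₀⟩
  obtain ⟨j, -, hj⟩ := Finset.univ.exists_max_image (fun k => ‖v k‖ / d k) Finset.univ_nonempty
  set c := ‖v j‖ / d j
  have hc : 0 < c :=
    (div_pos (norm_pos_iff.mpr hk₀) (hd k₀)).trans_le (hj k₀ (Finset.mem_univ _))
  have hv_le : (fun k => ‖v k‖) ≤ c • d := fun k =>
    (div_le_iff₀ (hd k)).mp (hj k (Finset.mem_univ _))
  have hvj : ‖v j‖ = c * d j := by simp only [c, div_mul_cancel₀ _ (hd j).ne']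
  have key : ‖μ‖ * (c * d j) ≤ r * (c * d j) :=
    calc ‖μ‖ * (c * d j) = ‖(A.map (fun a => (a : ℂ)) *ᵥ v) j‖ := by
          rw [heig, Pi.smul_apply, smul_eq_mul, norm_mul, hvj]
      _ ≤ (A *ᵥ fun k => ‖v k‖) j := norm_map_ofReal_mulVec_apply_le hA v j
      _ ≤ (A *ᵥ (c • d)) j := mulVec_apply_le_mulVec_apply hA hv_le j
      _ = c * (A *ᵥ d) j := by rw [mulVec_smul, Pi.smul_apply, smul_eq_mul]
      _ ≤ c * (r * d j) := mul_le_mul_of_nonneg_left (hAd j) hc.le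
      _ = r * (c * d j) := by ring
  exact le_of_mul_le_mul_right key (mul_pos hc (hd j))

theorem star_dotProduct_self_eq_sum_normSq (v : ι → ℂ) :
    star v ⬝ᵥ v = ((∑ j, Complex.normSq (v j) : ℝ) : ℂ) := by
  simp only [dotProduct, Pi.star_apply, Complex.star_def, Complex.ofReal_sum,
    Complex.normSq_eq_conj_mul_self]

end Matrix

theorem stmt_2_general (n : ℕ) (N : Fin n → Fin n → Fin n → ℝ)
    (hN : ∀ i j k, 0 ≤ N i j k)
    (d : Fin n → ℝ) (hd : ∀ i, 0 < d i)
    (hfus : ∀ i j, d i * d j = ∑ k, N i j k * d k)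
    (v : Fin n → ℂ) (hv : v ≠ 0) (μ : Fin n → ℂ)
    (heig : ∀ i, ((Matrix.of fun j k => N i j k).map (fun a => (a : ℂ))).mulVec v = μ i • v)
    (i : Fin n) :
    ‖(dotProduct (star v)
          (((Matrix.of fun j k => N i j k).map (fun a => (a : ℂ))).mulVec v))‖
      ≤ d i * ∑ j, Complex.normSq (v j) := by
  have hNd : (Matrix.of fun j k => N i j k) *ᵥ d = d i • d := by
    ext j
    exact (hfus i j).symm
  have hμ : ‖μ i‖ ≤ d i :=
    norm_eigenvalue_le_of_mulVec_le_smul (hN i) hd hNd.le hv (heig i)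
  rw [heig i, dotProduct_smul, star_dotProduct_self_eq_sum_normSq, smul_eq_mul, norm_mul,
    Complex.norm_real, Real.norm_of_nonneg (Finset.sum_nonneg fun j _ => Complex.normSq_nonneg _)]
  exact mul_le_mul_of_nonneg_right hμ (Finset.sum_nonneg fun j _ => Complex.normSq_nonneg _)

/-- For a simultaneous eigenvector `v` of all fusion matrices `N_i`, the matrix element
`⟨v, N_i v⟩` is bounded by `d i * ⟨v, v⟩`. -/
theorem stmt_2 (n : ℕ) (hn : 1 ≤ n) (N : Fin n → Fin n → Fin n → ℝ)
    (hN : ∀ i j k, 0 ≤ N i j k)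
    (d : Fin n → ℝ) (hd : ∀ i, 0 < d i)
    (hfus : ∀ i j, d i * d j = ∑ k, N i j k * d k)
    (v : Fin n → ℂ) (hv : v ≠ 0) (μ : Fin n → ℂ)
    (heig : ∀ i, ((Matrix.of fun j k => N i j k).map (fun a => (a : ℂ))).mulVec v = μ i • v)
    (i : Fin n) :
    ‖(dotProduct (star v)
          (((Matrix.of fun j k => N i j k).map (fun a => (a : ℂ))).mulVec v))‖
      ≤ d i * ∑ j, Complex.normSq (v j) :=
  stmt_2_general n N hN d hd hfus v hv μ heig i
end

section
/- Let n ≥ 1 and let S be an n×n complex matrix that is unitary and symmetric (Sᵀ = S), such that S_{0j} is a strictly positive real number for every j ∈ {0,…,n−1}. Suppose moreover that for all k, j, l the Verlinde number Σ_m S_{km}·S_{jm}·conj(S_{lm}) / S_{0m} is a nonnegative real number. Then for all k and i one has S_{00}·|S_{ki}| ≤ S_{0k}·S_{0i}. -/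
/-!
The fusion matrix `N_k = (N_{kj}^l)_{j,l}` is entrywise nonnegative. By unitarity each column
`S_{·i}` is a right eigenvector of `N_k` with eigenvalue `S_{ki}/S_{0i}`, and by symmetry the
positive vacuum row `S_{0·}` is a left eigenvector with eigenvalue `S_{0k}/S_{00}`. For a
nonnegative matrix with a positive left eigenvector for `ρ`, every eigenvalue `μ` satisfies
`|μ| ≤ ρ`: pair the entrywise inequality `|μ| |x| ≤ N_k |x|` with that left eigenvector.
-/

open Matrix ComplexConjugate

namespace Matrix

variable {ι : Type*} [Fintype ι]

theorem norm_le_of_mulVec_eq_smul_of_vecMul_eq_smul {A : Matrix ι ι ℝ} (hA : ∀ j l, 0 ≤ A j l)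
    {v : ι → ℝ} (hv : ∀ j, 0 < v j) {ρ : ℝ} (hvA : v ᵥ* A = ρ • v)
    {x : ι → ℂ} (hx : x ≠ 0) {μ : ℂ} (hAx : A.map (↑) *ᵥ x = μ • x) : ‖μ‖ ≤ ρ := by
  set y : ι → ℝ := fun l => ‖x l‖
  have hy : ‖μ‖ • y ≤ A *ᵥ y := fun j => calc
    ‖μ‖ * ‖x j‖ = ‖(A.map (↑) *ᵥ x) j‖ := by rw [hAx]; simp
    _ ≤ ∑ l, ‖(A j l : ℂ) * x l‖ := norm_sum_le _ _
    _ = (A *ᵥ y) j := by simp [mulVec, dotProduct, y, abs_of_nonneg (hA _ _)]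
  have hvy : 0 < v ⬝ᵥ y := by
    obtain ⟨l, hl⟩ := Function.ne_iff.mp hx
    exact Finset.sum_pos' (fun j _ => mul_nonneg (hv j).le (norm_nonneg _))
      ⟨l, Finset.mem_univ l, mul_pos (hv l) (norm_pos_iff.mpr hl)⟩
  refine le_of_mul_le_mul_right ?_ hvy
  calc ‖μ‖ * (v ⬝ᵥ y) = v ⬝ᵥ (‖μ‖ • y) := by rw [dotProduct_smul, smul_eq_mul]
    _ ≤ v ⬝ᵥ (A *ᵥ y) := dotProduct_le_dotProduct_of_nonneg_left hy fun j => (hv j).le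
    _ = ρ * (v ⬝ᵥ y) := by rw [dotProduct_mulVec, hvA, smul_dotProduct, smul_eq_mul]

variable [DecidableEq ι] {S : Matrix ι ι ℂ}

theorem sum_conj_mul_of_mem_unitaryGroup (hS : S ∈ unitaryGroup ι ℂ) (m i : ι) :
    ∑ l, conj (S l m) * S l i = if m = i then 1 else 0 := by
  simpa [mul_apply, one_apply] using congrFun₂ (mem_unitaryGroup_iff'.mp hS) m i

theorem sum_mul_conj_of_mem_unitaryGroup (hS : S ∈ unitaryGroup ι ℂ) (z m : ι) :
    ∑ j, S z j * conj (S m j) = if z = m then 1 else 0 := by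
  simpa [mul_apply, one_apply] using congrFun₂ (mem_unitaryGroup_iff.mp hS) z m

theorem transpose_apply_ne_zero_of_mem_unitaryGroup (hS : S ∈ unitaryGroup ι ℂ) (i : ι) :
    Sᵀ i ≠ 0 := fun h => by
  have hcol (l : ι) : S l i = 0 := congrFun h l
  simpa [hcol] using sum_conj_mul_of_mem_unitaryGroup hS i i

end Matrix

section Fusion

variable {ι : Type*} [Fintype ι]

/-- `fusionMatrix S z k j l` is the Verlinde number `N_{kj}^l`, with `z` the vacuum label. -/
noncomputable def fusionMatrix (S : Matrix ι ι ℂ) (z k : ι) : Matrix ι ι ℂ :=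
  of fun j l => ∑ m, S k m * S j m * conj (S l m) / S z m

variable [DecidableEq ι] {S : Matrix ι ι ℂ}

theorem fusionMatrix_mulVec_transpose (hS : S ∈ unitaryGroup ι ℂ) (z k i : ι) :
    fusionMatrix S z k *ᵥ Sᵀ i = (S k i / S z i) • Sᵀ i := by
  ext j
  calc ∑ l, (∑ m, S k m * S j m * conj (S l m) / S z m) * S l i
      = ∑ m, S k m * S j m / S z m * ∑ l, conj (S l m) * S l i := by
        simp only [Finset.sum_mul, Finset.mul_sum]
        rw [Finset.sum_comm]
        exact Finset.sum_congr rfl fun m _ => Finset.sum_congr rfl fun l _ => by ring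
    _ = S k i / S z i * S j i := by
        simp [sum_conj_mul_of_mem_unitaryGroup hS]
        ring

theorem vecMul_map_conj_fusionMatrix (hS : S ∈ unitaryGroup ι ℂ) (hsym : Sᵀ = S) (z k : ι) :
    S z ᵥ* (fusionMatrix S z k).map conj = (conj (S z k) / conj (S z z)) • S z := by
  have hS' (p q : ι) : S q p = S p q := congrFun₂ hsym p q
  ext l
  calc ∑ j, S z j * conj (∑ m, S k m * S j m * conj (S l m) / S z m)
      = ∑ m, conj (S k m) * S l m / conj (S z m) * ∑ j, S z j * conj (S m j) := by
        simp only [map_sum, map_div₀, map_mul, Complex.conj_conj, Finset.mul_sum]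
        rw [Finset.sum_comm]
        exact Finset.sum_congr rfl fun m _ => Finset.sum_congr rfl fun j _ => by
          rw [hS' m j]; ring
    _ = conj (S z k) / conj (S z z) * S z l := by
        simp [sum_mul_conj_of_mem_unitaryGroup hS, hS' z]
        ring

end Fusion

/-- For a unitary symmetric modular S-matrix with positive real first row and nonnegative
real Verlinde numbers, `S_{00} |S_{ki}| ≤ S_{0k} S_{0i}`. -/
theorem stmt_4 (n : ℕ) (hn : 1 ≤ n) (S : Matrix (Fin n) (Fin n) ℂ)
    (hU : S ∈ Matrix.unitaryGroup (Fin n) ℂ)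
    (hsym : S.transpose = S)
    (hpos : ∀ j, 0 < (S ⟨0, hn⟩ j).re ∧ (S ⟨0, hn⟩ j).im = 0)
    (hVer : ∀ k j l,
      0 ≤ (∑ m, S k m * S j m * (starRingEnd ℂ) (S l m) / S ⟨0, hn⟩ m).re ∧
        (∑ m, S k m * S j m * (starRingEnd ℂ) (S l m) / S ⟨0, hn⟩ m).im = 0)
    (k i : Fin n) :
    (S ⟨0, hn⟩ ⟨0, hn⟩).re * ‖S k i‖ ≤ (S ⟨0, hn⟩ k).re * (S ⟨0, hn⟩ i).re := by
  set z : Fin n := ⟨0, hn⟩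
  set a : Fin n → ℝ := fun j => (S z j).re
  set N : Matrix (Fin n) (Fin n) ℝ := (fusionMatrix S z k).map Complex.re
  have ha : S z = (↑) ∘ a := funext fun j => Complex.ext rfl (hpos j).2
  have hN : N.map (↑) = fusionMatrix S z k := ext fun j l => Complex.ext (by simp [N])
    (by simp only [N, map_apply, Complex.ofReal_im]; exact (hVer k j l).2.symm)
  have hleft : a ᵥ* N = (a k / a z) • a := by
    have h := vecMul_map_conj_fusionMatrix hU hsym z k
    rw [← hN, ha] at h
    ext l
    apply Complex.ofReal_injective
    simpa [vecMul, dotProduct, Function.comp_def] using congrFun h l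
  have hright : N.map (↑) *ᵥ Sᵀ i = (S k i / S z i) • Sᵀ i := by
    rw [hN]; exact fusionMatrix_mulVec_transpose hU z k i
  have hμ := norm_le_of_mulVec_eq_smul_of_vecMul_eq_smul (fun j l => (hVer k j l).1)
    (fun j => (hpos j).1) hleft (transpose_apply_ne_zero_of_mem_unitaryGroup hU i) hright
  rw [norm_div, congrFun ha i, Function.comp_apply, Complex.norm_real,
    Real.norm_of_nonneg (hpos i).1.le, div_le_div_iff₀ (hpos i).1 (hpos z).1] at hμ
  linarith
end

section
/- For every complex number x with |x| < 1, one has 2·(Σ_{m∈ℤ} x^{2(2m+1)²})·(Σ_{n∈ℤ} x^{8n²}) = (Σ_{k∈ℤ} x^{(2k+1)²})², where all sums are absolutely convergent series indexed by ℤ. -/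
open Function Set

lemma auxsum {x : ℂ} (h0 : 0 < ‖x‖) (hx : ‖x‖ < 1) (g : ℤ → ℤ) (hg : ∀ k, |k| ≤ g k) :
    Summable fun k : ℤ => ‖x‖ ^ (g k) := by
  have habs : Summable fun k : ℤ => ‖x‖ ^ (|k|) := by
    apply Summable.of_nat_of_neg_add_one
    · simpa [zpow_natCast] using summable_geometric_of_lt_one (norm_nonneg x) hx
    · have : Summable fun n : ℕ => ‖x‖ ^ (n + 1) :=
        (summable_geometric_of_lt_one (norm_nonneg x) hx).comp_injective (add_left_injective 1)
      refine this.congr fun n => ?_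
      have h' : |(-((n:ℤ) + 1))| = ((n + 1 : ℕ) : ℤ) := by
        rw [abs_neg, abs_of_nonneg (by positivity)]; push_cast; ring
      rw [h', zpow_natCast]
  refine habs.of_nonneg_of_le (fun k => zpow_nonneg h0.le _) fun k =>
    zpow_le_zpow_right_of_le_one₀ h0 hx.le (hg k)

lemma auxsumC {x : ℂ} (h0 : 0 < ‖x‖) (hx : ‖x‖ < 1) (g : ℤ → ℤ) (hg : ∀ k, |k| ≤ g k) :
    Summable fun k : ℤ => ‖x ^ (g k)‖ := by
  simpa [norm_zpow] using auxsum h0 hx g hg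

/-- Theta function identity `2 θ₂(τ) θ₃(τ) = θ₂(τ/2)²` in terms of `x = e^{iπτ/8}`. -/
theorem stmt_6 (x : ℂ) (hx : ‖x‖ < 1) :
    (Summable fun m : ℤ => x ^ (2 * (2 * m + 1) ^ 2)) ∧
    (Summable fun n : ℤ => x ^ (8 * n ^ 2)) ∧
    (Summable fun k : ℤ => x ^ ((2 * k + 1) ^ 2)) ∧
    2 * (∑' m : ℤ, x ^ (2 * (2 * m + 1) ^ 2)) * (∑' n : ℤ, x ^ (8 * n ^ 2))
      = (∑' k : ℤ, x ^ ((2 * k + 1) ^ 2)) ^ 2 := by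
  rcases eq_or_ne x 0 with rfl | hx0
  · have h1 : (fun m : ℤ => (0:ℂ) ^ (2 * (2 * m + 1) ^ 2)) = fun _ => 0 := by
      funext m
      have hm : 2 * m + 1 ≠ 0 := by omega
      have : 2 * (2 * m + 1) ^ 2 ≠ 0 := by positivity
      exact zero_zpow _ this
    have h2 : (fun n : ℤ => (0:ℂ) ^ (8 * n ^ 2)) = fun n : ℤ => if n = 0 then 1 else 0 := by
      funext n
      rcases eq_or_ne n 0 with rfl | hn
      · simp
      · have : 8 * n ^ 2 ≠ 0 := mul_ne_zero (by norm_num) (pow_ne_zero 2 hn)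
        simp [zero_zpow _ this, hn]
    have h3 : (fun k : ℤ => (0:ℂ) ^ ((2 * k + 1) ^ 2)) = fun _ => 0 := by
      funext k
      have hk : 2 * k + 1 ≠ 0 := by omega
      have : (2 * k + 1) ^ 2 ≠ 0 := by positivity
      exact zero_zpow _ this
    rw [h1, h2, h3]
    refine ⟨summable_zero, ?_, summable_zero, by simp⟩
    exact summable_of_finite_support (Set.Finite.subset (Set.finite_singleton 0)
      (by intro n hn; simp [Function.support] at hn ⊢; tauto))
  have h0 : 0 < ‖x‖ := norm_pos_iff.mpr hx0
  have hb1 : ∀ m : ℤ, |m| ≤ 2 * (2 * m + 1) ^ 2 := by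
    intro m
    rcases abs_cases m with ⟨h, _⟩ | ⟨h, _⟩ <;> nlinarith [sq_nonneg (2*m+1), sq_nonneg m, sq_nonneg (m+1)]
  have hb2 : ∀ n : ℤ, |n| ≤ 8 * n ^ 2 := by
    intro n
    rcases abs_cases n with ⟨h, _⟩ | ⟨h, _⟩ <;> nlinarith [sq_nonneg n]
  have hb3 : ∀ k : ℤ, |k| ≤ (2 * k + 1) ^ 2 := by
    intro k
    rcases abs_cases k with ⟨h, _⟩ | ⟨h, _⟩ <;> nlinarith [sq_nonneg (2*k+1), sq_nonneg k, sq_nonneg (k+1)]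
  have hn1 := auxsumC h0 hx _ hb1
  have hn2 := auxsumC h0 hx _ hb2
  have hn3 := auxsumC h0 hx _ hb3
  refine ⟨hn1.of_norm, hn2.of_norm, hn3.of_norm, ?_⟩
  -- the double-sum function
  set F : ℤ × ℤ → ℂ := fun p => x ^ ((2 * p.1 + 1) ^ 2 + (2 * p.2 + 1) ^ 2) with hF
  set A := ∑' m : ℤ, x ^ (2 * (2 * m + 1) ^ 2) with hA
  set B := ∑' n : ℤ, x ^ (8 * n ^ 2) with hB
  -- RHS as double sum
  have hsq : (∑' k : ℤ, x ^ ((2 * k + 1) ^ 2)) ^ 2 = ∑' p : ℤ × ℤ, F p := by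
    rw [sq, tsum_mul_tsum_of_summable_norm hn3 hn3]
    exact tsum_congr fun p => (zpow_add₀ hx0 _ _).symm
  -- product HasSum
  have hAB : HasSum (fun p : ℤ × ℤ => x ^ (2 * (2 * p.1 + 1) ^ 2) * x ^ (8 * p.2 ^ 2)) (A * B) := by
    have hs := summable_mul_of_summable_norm (f := fun m : ℤ => x ^ (2 * (2 * m + 1) ^ 2))
      (g := fun n : ℤ => x ^ (8 * n ^ 2)) hn1 hn2
    have := hs.hasSum
    rwa [← tsum_mul_tsum_of_summable_norm hn1 hn2] at this
  have hBA : HasSum (fun p : ℤ × ℤ => x ^ (8 * p.1 ^ 2) * x ^ (2 * (2 * p.2 + 1) ^ 2)) (B * A) := by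
    have hs := summable_mul_of_summable_norm (f := fun n : ℤ => x ^ (8 * n ^ 2))
      (g := fun m : ℤ => x ^ (2 * (2 * m + 1) ^ 2)) hn2 hn1
    have := hs.hasSum
    rwa [← tsum_mul_tsum_of_summable_norm hn2 hn1] at this
  -- the two injections
  set e₁ : ℤ × ℤ → ℤ × ℤ := fun p => (p.1 + p.2, p.1 - p.2) with he₁
  set e₂ : ℤ × ℤ → ℤ × ℤ := fun p => (p.1 + p.2, p.1 - p.2 - 1) with he₂
  have hi₁ : Injective e₁ := by
    rintro ⟨a, b⟩ ⟨c, d⟩ h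
    simp only [he₁, Prod.mk.injEq] at h
    obtain ⟨h1, h2⟩ := h
    simp only [Prod.mk.injEq]; omega
  have hi₂ : Injective e₂ := by
    rintro ⟨a, b⟩ ⟨c, d⟩ h
    simp only [he₂, Prod.mk.injEq] at h
    obtain ⟨h1, h2⟩ := h
    simp only [Prod.mk.injEq]; omega
  have hcompl : IsCompl (Set.range e₁) (Set.range e₂) := by
    constructor
    · rw [disjoint_iff_inf_le]
      rintro ⟨j, k⟩ ⟨⟨⟨m, n⟩, h1⟩, ⟨⟨m', n'⟩, h2⟩⟩
      simp only [he₁, he₂, Prod.mk.injEq] at h1 h2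
      omega
    · rw [codisjoint_iff_le_sup]
      rintro ⟨j, k⟩ -
      rcases Int.even_or_odd (j + k) with ⟨m, hm⟩ | ⟨m, hm⟩
      · exact Or.inl ⟨(m, j - m), by simp only [he₁, Prod.mk.injEq]; omega⟩
      · exact Or.inr ⟨(m + 1, j - m - 1), by simp only [he₂, Prod.mk.injEq]; omega⟩
  -- HasSum along each range
  have hS1 : HasSum (F ∘ e₁) (A * B) := by
    have heq : F ∘ e₁ = fun p : ℤ × ℤ => x ^ (2 * (2 * p.1 + 1) ^ 2) * x ^ (8 * p.2 ^ 2) := by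
      funext p
      have hexp : (2 * (p.1 + p.2) + 1) ^ 2 + (2 * (p.1 - p.2) + 1) ^ 2
          = 2 * (2 * p.1 + 1) ^ 2 + 8 * p.2 ^ 2 := by ring
      simp only [hF, he₁, Function.comp_apply]
      rw [hexp, zpow_add₀ hx0]
    rw [heq]; exact hAB
  have hS2 : HasSum (F ∘ e₂) (B * A) := by
    have heq : F ∘ e₂ = fun p : ℤ × ℤ => x ^ (8 * p.1 ^ 2) * x ^ (2 * (2 * p.2 + 1) ^ 2) := by
      funext p
      have hexp : (2 * (p.1 + p.2) + 1) ^ 2 + (2 * (p.1 - p.2 - 1) + 1) ^ 2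
          = 8 * p.1 ^ 2 + 2 * (2 * p.2 + 1) ^ 2 := by ring
      simp only [hF, he₂, Function.comp_apply]
      rw [hexp, zpow_add₀ hx0]
    rw [heq]; exact hBA
  have hFsum : HasSum F (A * B + B * A) :=
    HasSum.add_isCompl hcompl ((hi₁.hasSum_range_iff (f := F)).mpr hS1) ((hi₂.hasSum_range_iff (f := F)).mpr hS2)
  rw [hsq, hFsum.tsum_eq]
  ring
end

section
/- For every complex number x with |x| < 1, one has 2·(Σ_{m∈ℤ} x^{2(2m+1)²})·(Σ_{n∈ℤ} (−1)ⁿ x^{8n²}) = (Σ_{k∈ℤ} (−1)^{k(k+1)/2} x^{(2k+1)²})², where all sums are absolutely convergent series indexed by ℤ. -/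
private lemma neg_one_zpow_congr {s t : ℤ} (h : Even (s - t)) :
    (-1 : ℂ) ^ s = (-1 : ℂ) ^ t := by
  obtain ⟨r, hr⟩ := h
  have hs : s = t + 2 * r := by omega
  rw [hs, zpow_add₀ (by norm_num : (-1:ℂ) ≠ 0), zpow_mul]
  norm_num

private lemma key_term (x : ℂ) {s t : ℤ} {E F : ℕ} (h : Even (s - t)) (hE : E = F) :
    (-1 : ℂ) ^ s * x ^ E = (-1 : ℂ) ^ t * x ^ F := by
  rw [hE, neg_one_zpow_congr h]

private lemma toNat_add_eq {a b c d : ℤ} (h : a + b = c + d) (ha : 0 ≤ a) (hb : 0 ≤ b)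
    (hc : 0 ≤ c) (hd : 0 ≤ d) : a.toNat + b.toNat = c.toNat + d.toNat := by omega

private lemma summable_geom_int {r : ℝ} (h0 : 0 ≤ r) (h1 : r < 1) :
    Summable fun k : ℤ => r ^ k.natAbs := by
  apply Summable.of_nat_of_neg
  · simpa using summable_geometric_of_lt_one h0 h1
  · simpa using summable_geometric_of_lt_one h0 h1

private lemma summable_norm_aux (x : ℂ) (hx : ‖x‖ < 1) (c : ℤ → ℂ) (E : ℤ → ℤ)
    (hc : ∀ k, ‖c k‖ = 1) (hE : ∀ k, (k.natAbs : ℤ) ≤ E k) :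
    Summable fun k : ℤ => ‖c k * x ^ (E k).toNat‖ := by
  refine Summable.of_nonneg_of_le (fun k => norm_nonneg _) ?_
    (summable_geom_int (norm_nonneg x) hx)
  intro k
  rw [norm_mul, hc, one_mul, norm_pow]
  exact pow_le_pow_of_le_one (norm_nonneg x) hx.le (by have := hE k; omega)

private lemma bound1 (m : ℤ) : (m.natAbs : ℤ) ≤ 2 * (2*m+1)^2 := by
  rcases le_or_gt 0 m with h | h
  · rw [Int.natAbs_of_nonneg h]; nlinarith [sq_nonneg m]
  · have hm : (m.natAbs : ℤ) = -m := by omega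
    rw [hm]
    nlinarith [mul_nonneg (by linarith : (0:ℤ) ≤ -(m+1)) (by linarith : (0:ℤ) ≤ -(8*m+1))]

private lemma bound2 (n : ℤ) : (n.natAbs : ℤ) ≤ 8 * n^2 := by
  rcases le_or_gt 0 n with h | h
  · rw [Int.natAbs_of_nonneg h]
    nlinarith [mul_nonneg h h]
  · have hn : (n.natAbs : ℤ) = -n := by omega
    rw [hn]
    nlinarith [mul_nonneg (by linarith : (0:ℤ) ≤ -n) (by linarith : (0:ℤ) ≤ -(8*n+1))]

private lemma bound3 (k : ℤ) : (k.natAbs : ℤ) ≤ (2*k+1)^2 := by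
  rcases le_or_gt 0 k with h | h
  · rw [Int.natAbs_of_nonneg h]; nlinarith [sq_nonneg k]
  · have hk : (k.natAbs : ℤ) = -k := by omega
    rw [hk]
    nlinarith [mul_nonneg (by linarith : (0:ℤ) ≤ -(k+1)) (by linarith : (0:ℤ) ≤ -(4*k+1))]

private def myEquiv : (Bool × ℤ × ℤ) ≃ ℤ × ℤ where
  toFun p := if p.1 then (p.2.1 + p.2.2, p.2.2 - p.2.1 - 1) else (p.2.1 + p.2.2, p.2.1 - p.2.2)
  invFun q := if (q.1 + q.2) % 2 = 0 then (false, ((q.1 + q.2) / 2, (q.1 - q.2) / 2))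
    else (true, ((q.1 - q.2 - 1) / 2, (q.1 + q.2 + 1) / 2))
  left_inv := by
    rintro ⟨b, m, n⟩
    cases b <;> simp only [Bool.false_eq_true, if_true, if_false] <;>
      [rw [if_pos (by omega)]; rw [if_neg (by omega)]] <;>
      simp [Prod.ext_iff] <;> omega
  right_inv := by
    rintro ⟨j, k⟩
    dsimp only
    by_cases h : (j + k) % 2 = 0
    · rw [if_pos h]
      simp only [Bool.false_eq_true, if_false]
      simp [Prod.ext_iff]; omega
    · rw [if_neg h]
      simp only [if_true]
      simp [Prod.ext_iff]; omega

private lemma term_false (x : ℂ) (m n : ℤ) :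
    ((-1:ℂ) ^ ((m+n) * ((m+n) + 1) / 2) * x ^ (((2*(m+n)+1)^2).toNat)) *
      ((-1:ℂ) ^ ((m-n) * ((m-n) + 1) / 2) * x ^ (((2*(m-n)+1)^2).toNat)) =
    x ^ ((2*(2*m+1)^2).toNat) * ((-1:ℂ) ^ n * x ^ ((8*n^2).toNat)) := by
  obtain ⟨cj, hcj⟩ := Int.even_mul_succ_self (m+n)
  obtain ⟨ck, hck⟩ := Int.even_mul_succ_self (m-n)
  obtain ⟨em, hem⟩ := Int.even_mul_succ_self m
  obtain ⟨en, hen⟩ := Int.even_mul_succ_self (n-1)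
  have hdj : (m+n) * ((m+n) + 1) / 2 = cj := by omega
  have hdk : (m-n) * ((m-n) + 1) / 2 = ck := by omega
  have h2 : 2*(cj + ck - n) = 2*(2*em + 2*en) := by linear_combination -hcj - hck + 2*hem + 2*hen
  have hsign : Even (cj + ck - n) := ⟨em + en, by omega⟩
  have hE : ((2*(m+n)+1)^2).toNat + ((2*(m-n)+1)^2).toNat
      = (2*(2*m+1)^2).toNat + (8*n^2).toNat :=
    toNat_add_eq (by ring) (by positivity) (by positivity) (by positivity) (by positivity)
  rw [hdj, hdk]
  calc ((-1:ℂ) ^ cj * x ^ (((2*(m+n)+1)^2).toNat)) *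
        ((-1:ℂ) ^ ck * x ^ (((2*(m-n)+1)^2).toNat))
      = (-1:ℂ) ^ (cj + ck) * x ^ ((((2*(m+n)+1)^2).toNat) + (((2*(m-n)+1)^2).toNat)) := by
        rw [zpow_add₀ (by norm_num : (-1:ℂ) ≠ 0), pow_add]; ring
    _ = (-1:ℂ) ^ n * x ^ (((2*(2*m+1)^2).toNat) + ((8*n^2).toNat)) := key_term x hsign hE
    _ = _ := by rw [pow_add]; ring

private lemma term_true (x : ℂ) (m n : ℤ) :
    ((-1:ℂ) ^ ((m+n) * ((m+n) + 1) / 2) * x ^ (((2*(m+n)+1)^2).toNat)) *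
      ((-1:ℂ) ^ ((n-m-1) * ((n-m-1) + 1) / 2) * x ^ (((2*(n-m-1)+1)^2).toNat)) =
    x ^ ((2*(2*m+1)^2).toNat) * ((-1:ℂ) ^ n * x ^ ((8*n^2).toNat)) := by
  obtain ⟨cj, hcj⟩ := Int.even_mul_succ_self (m+n)
  obtain ⟨ck, hck⟩ := Int.even_mul_succ_self (n-m-1)
  obtain ⟨em, hem⟩ := Int.even_mul_succ_self m
  obtain ⟨en, hen⟩ := Int.even_mul_succ_self (n-1)
  have hdj : (m+n) * ((m+n) + 1) / 2 = cj := by omega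
  have hdk : (n-m-1) * ((n-m-1) + 1) / 2 = ck := by omega
  have h2 : 2*(cj + ck - n) = 2*(2*em + 2*en) := by linear_combination -hcj - hck + 2*hem + 2*hen
  have hsign : Even (cj + ck - n) := ⟨em + en, by omega⟩
  have hE : ((2*(m+n)+1)^2).toNat + ((2*(n-m-1)+1)^2).toNat
      = (2*(2*m+1)^2).toNat + (8*n^2).toNat :=
    toNat_add_eq (by ring) (by positivity) (by positivity) (by positivity) (by positivity)
  rw [hdj, hdk]
  calc ((-1:ℂ) ^ cj * x ^ (((2*(m+n)+1)^2).toNat)) *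
        ((-1:ℂ) ^ ck * x ^ (((2*(n-m-1)+1)^2).toNat))
      = (-1:ℂ) ^ (cj + ck) * x ^ ((((2*(m+n)+1)^2).toNat) + (((2*(n-m-1)+1)^2).toNat)) := by
        rw [zpow_add₀ (by norm_num : (-1:ℂ) ≠ 0), pow_add]; ring
    _ = (-1:ℂ) ^ n * x ^ (((2*(2*m+1)^2).toNat) + ((8*n^2).toNat)) := key_term x hsign hE
    _ = _ := by rw [pow_add]; ring

/-- Theta function identity `2 θ₂(τ) θ₄(τ) = (Σ_k (−1)^{k(k+1)/2} x^{(2k+1)²})²`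
in terms of `x = e^{iπτ/8}`. -/
theorem stmt_7 (x : ℂ) (hx : ‖x‖ < 1) :
    (Summable fun m : ℤ => x ^ (2 * (2 * m + 1) ^ 2)) ∧
    (Summable fun n : ℤ => (-1 : ℂ) ^ n * x ^ (8 * n ^ 2)) ∧
    (Summable fun k : ℤ => (-1 : ℂ) ^ (k * (k + 1) / 2) * x ^ ((2 * k + 1) ^ 2)) ∧
    2 * (∑' m : ℤ, x ^ (2 * (2 * m + 1) ^ 2)) * (∑' n : ℤ, (-1 : ℂ) ^ n * x ^ (8 * n ^ 2))
      = (∑' k : ℤ, (-1 : ℂ) ^ (k * (k + 1) / 2) * x ^ ((2 * k + 1) ^ 2)) ^ 2 := by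
  set a : ℤ → ℂ := fun m => x ^ (2 * (2 * m + 1) ^ 2).toNat with ha_def
  set b : ℤ → ℂ := fun n => (-1 : ℂ) ^ n * x ^ (8 * n ^ 2).toNat with hb_def
  set h : ℤ → ℂ := fun k => (-1 : ℂ) ^ (k * (k + 1) / 2) * x ^ ((2 * k + 1) ^ 2).toNat with hh_def
  have hA : (fun m : ℤ => x ^ (2 * (2 * m + 1) ^ 2)) = a := by
    funext m; simp only [ha_def]
    conv_lhs => rw [show ((2 * (2*m+1)^2 : ℤ)) = (((2*(2*m+1)^2).toNat : ℕ) : ℤ) from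
      (Int.toNat_of_nonneg (by positivity)).symm]
    rw [zpow_natCast]
  have hB : (fun n : ℤ => (-1 : ℂ) ^ n * x ^ (8 * n ^ 2)) = b := by
    funext n; simp only [hb_def]
    conv_lhs => rw [show ((8 * n^2 : ℤ)) = (((8 * n^2).toNat : ℕ) : ℤ) from
      (Int.toNat_of_nonneg (by positivity)).symm]
    rw [zpow_natCast]
  have hH : (fun k : ℤ => (-1 : ℂ) ^ (k * (k + 1) / 2) * x ^ ((2 * k + 1) ^ 2)) = h := by
    funext k; simp only [hh_def]
    conv_lhs => rw [show (((2 * k + 1)^2 : ℤ)) = ((((2 * k + 1)^2).toNat : ℕ) : ℤ) from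
      (Int.toNat_of_nonneg (by positivity)).symm]
    rw [zpow_natCast]
  have hAn : Summable fun m : ℤ => ‖a m‖ := by
    have := summable_norm_aux x hx (fun _ => 1) (fun m => 2 * (2 * m + 1) ^ 2)
      (by simp) (fun m => bound1 m)
    simpa [ha_def] using this
  have hBn : Summable fun n : ℤ => ‖b n‖ := by
    refine summable_norm_aux x hx (fun n => (-1:ℂ) ^ n) (fun n => 8 * n ^ 2) ?_
      (fun n => bound2 n)
    intro k; rw [norm_zpow]; norm_num
  have hHn : Summable fun k : ℤ => ‖h k‖ := by
    refine summable_norm_aux x hx (fun k => (-1:ℂ) ^ (k * (k+1) / 2)) (fun k => (2 * k + 1) ^ 2) ?_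
      (fun k => bound3 k)
    intro k; rw [norm_zpow]; norm_num
  have Sa : Summable a := hAn.of_norm
  have Sb : Summable b := hBn.of_norm
  have Sh : Summable h := hHn.of_norm
  refine ⟨hA ▸ Sa, hB ▸ Sb, hH ▸ Sh, ?_⟩
  rw [hA, hB, hH]
  -- product of the square
  have hprod : (∑' k, h k) * (∑' k, h k) = ∑' p : ℤ × ℤ, h p.1 * h p.2 :=
    tsum_mul_tsum_of_summable_norm hHn hHn
  have hsum2 : Summable fun p : ℤ × ℤ => h p.1 * h p.2 :=
    summable_mul_of_summable_norm hHn hHn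
  have hterm : ∀ q : Bool × ℤ × ℤ, h (myEquiv q).1 * h (myEquiv q).2 = a q.2.1 * b q.2.2 := by
    rintro ⟨bo, m, n⟩
    cases bo
    · have e1 : myEquiv (false, m, n) = (m + n, m - n) := by
        simp [myEquiv]
      rw [e1]
      simpa [ha_def, hb_def, hh_def] using term_false x m n
    · have e1 : myEquiv (true, m, n) = (m + n, n - m - 1) := by
        simp [myEquiv]
      rw [e1]
      simpa [ha_def, hb_def, hh_def] using term_true x m n
  have hcomp : ∑' q : Bool × ℤ × ℤ, a q.2.1 * b q.2.2 = ∑' p : ℤ × ℤ, h p.1 * h p.2 := by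
    rw [← myEquiv.tsum_eq (fun p : ℤ × ℤ => h p.1 * h p.2)]
    exact tsum_congr fun q => (hterm q).symm
  have hsum3 : Summable fun q : Bool × ℤ × ℤ => a q.2.1 * b q.2.2 :=
    ((myEquiv.summable_iff (f := fun p : ℤ × ℤ => h p.1 * h p.2)).2 hsum2).congr hterm
  have hsumab : Summable fun p : ℤ × ℤ => a p.1 * b p.2 :=
    summable_mul_of_summable_norm hAn hBn
  have hbool : ∑' q : Bool × ℤ × ℤ, a q.2.1 * b q.2.2 = 2 * ∑' p : ℤ × ℤ, a p.1 * b p.2 := by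
    rw [Summable.tsum_prod' hsum3 (fun _ => hsumab)]
    rw [tsum_fintype]
    simp [two_mul]
  have hab : (∑' m, a m) * (∑' n, b n) = ∑' p : ℤ × ℤ, a p.1 * b p.2 :=
    tsum_mul_tsum_of_summable_norm hAn hBn
  rw [sq, hprod, ← hcomp, hbool, ← hab, mul_assoc]
end

section
/- For all complex numbers x, y with |x| < 1 and |y| < 1, one has (1 + (Σ_{j∈ℤ} (−1)ʲ x^{j²})·(Σ_{k∈ℤ} (−1)ᵏ y^{k²}))/2 = Σ_{(j,k)} (x^{j²} − x^{(j+1)²})·(y^{k²} − y^{(k+1)²}), where the right-hand sum runs over all pairs of nonnegative integers (j,k) with j ≡ k (mod 2), and all series converge absolutely. -/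
/-!
Write `a_n(z) = z^(n²) - z^((n+1)²)`. Telescoping gives `∑ a_n(z) = 1`, and pairing the terms
`j = n` and `j = -(n+1)` of the theta series gives `∑ (-1)^n a_n(z) = ∑_{j ∈ ℤ} (-1)^j z^(j²)`.
Since the parity constraint `j ≡ k (mod 2)` has indicator `(1 + (-1)^j (-1)^k) / 2`, the
constrained double sum is half the sum of the two products of these absolutely convergent series.
-/

section PowSq

variable {𝕜 : Type*} [NormedField 𝕜] {z : 𝕜}

lemma summable_norm_pow_sq (hz : ‖z‖ < 1) : Summable fun n : ℕ => ‖z ^ (n ^ 2)‖ := by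
  refine (summable_geometric_of_lt_one (norm_nonneg z) hz).of_nonneg_of_le (fun _ => norm_nonneg _)
    fun n => ?_
  rw [norm_pow]
  exact pow_le_pow_of_le_one (norm_nonneg z) hz.le (Nat.le_self_pow two_ne_zero n)

lemma summable_norm_pow_sq_sub_pow_succ_sq (hz : ‖z‖ < 1) :
    Summable fun n : ℕ => ‖z ^ (n ^ 2) - z ^ ((n + 1) ^ 2)‖ := by
  have h := summable_norm_pow_sq hz
  exact (h.add ((summable_nat_add_iff 1).mpr h)).of_nonneg_of_le (fun _ => norm_nonneg _)
    fun n => norm_sub_le _ _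

variable [CompleteSpace 𝕜]

lemma hasSum_pow_sq_sub_pow_succ_sq (hz : ‖z‖ < 1) :
    HasSum (fun n : ℕ => z ^ (n ^ 2) - z ^ ((n + 1) ^ 2)) 1 := by
  have h := (summable_norm_pow_sq hz).of_norm.hasSum
  simpa using h.sub ((hasSum_nat_add_iff' 1).mpr h)

lemma hasSum_int_neg_one_zpow_mul_zpow_sq (hz : ‖z‖ < 1) :
    HasSum (fun j : ℤ => (-1 : 𝕜) ^ j * z ^ (j ^ 2))
      (∑' n : ℕ, (-1 : 𝕜) ^ n * (z ^ (n ^ 2) - z ^ ((n + 1) ^ 2))) := by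
  have h_nonneg : Summable fun n : ℕ => (-1 : 𝕜) ^ n * z ^ (n ^ 2) := by
    apply Summable.of_norm
    simpa using summable_norm_pow_sq hz
  have h_neg : Summable fun n : ℕ => (-1 : 𝕜) ^ (n + 1) * z ^ ((n + 1) ^ 2) :=
    (summable_nat_add_iff (f := fun n : ℕ => (-1 : 𝕜) ^ n * z ^ (n ^ 2)) 1).mpr h_nonneg
  have h_split : ∑' n : ℕ, (-1 : 𝕜) ^ n * (z ^ (n ^ 2) - z ^ ((n + 1) ^ 2))
      = (∑' n : ℕ, (-1 : 𝕜) ^ n * z ^ (n ^ 2)) + ∑' n : ℕ, (-1) ^ (n + 1) * z ^ ((n + 1) ^ 2) := by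
    rw [← h_nonneg.tsum_add h_neg]
    exact tsum_congr fun n => by ring
  rw [h_split]
  refine HasSum.of_nat_of_neg_add_one ?_ ?_
  · convert h_nonneg.hasSum using 2 with n
    norm_cast
  · convert h_neg.hasSum using 2 with n
    rw [neg_sq, zpow_neg, ← inv_zpow, inv_neg, inv_one]
    norm_cast

end PowSq

lemma ite_mod_two_eq_mod_two {K : Type*} [Field K] [NeZero (2 : K)] (j k : ℕ) (c : K) :
    (if j % 2 = k % 2 then c else 0) = (c + (-1) ^ j * (-1) ^ k * c) / 2 := by
  have h_parity : j % 2 = k % 2 ↔ Even (j + k) := by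
    rw [Nat.even_add, Nat.even_iff, Nat.even_iff]; omega
  rw [← pow_add]
  split_ifs with h
  · rw [(h_parity.mp h).neg_one_pow, one_mul, add_self_div_two]
  · rw [(Nat.not_even_iff_odd.mp (h_parity.not.mp h)).neg_one_pow, neg_one_mul, add_neg_cancel,
      zero_div]

lemma hasSum_ite_mod_two_eq_mul {K : Type*} [NormedField K] [CompleteSpace K] [NeZero (2 : K)]
    {a b : ℕ → K} (ha : Summable fun n => ‖a n‖) (hb : Summable fun n => ‖b n‖) :
    HasSum (fun p : ℕ × ℕ => if p.1 % 2 = p.2 % 2 then a p.1 * b p.2 else 0)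
      (((∑' n, a n) * (∑' n, b n) + (∑' n, (-1) ^ n * a n) * (∑' n, (-1) ^ n * b n)) / 2) := by
  have ha' : Summable fun n => ‖(-1 : K) ^ n * a n‖ := by simpa using ha
  have hb' : Summable fun n => ‖(-1 : K) ^ n * b n‖ := by simpa using hb
  have h_prod := (summable_mul_of_summable_norm ha hb).hasSum
  have h_prod_signed := (summable_mul_of_summable_norm ha' hb').hasSum
  rw [tsum_mul_tsum_of_summable_norm ha hb, tsum_mul_tsum_of_summable_norm ha' hb']
  simp_rw [ite_mod_two_eq_mod_two]
  convert (h_prod.add h_prod_signed).div_const 2 using 2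
  ring

/-- Character decomposition identity for the degenerate Verma modules of the `c = 1`
free boson orbifold. -/
theorem stmt_8 (x y : ℂ) (hx : ‖x‖ < 1) (hy : ‖y‖ < 1) :
    (Summable fun j : ℤ => (-1 : ℂ) ^ j * x ^ (j ^ 2)) ∧
    (Summable fun k : ℤ => (-1 : ℂ) ^ k * y ^ (k ^ 2)) ∧
    (Summable fun p : ℕ × ℕ =>
      if p.1 % 2 = p.2 % 2 then
        (x ^ (p.1 ^ 2) - x ^ ((p.1 + 1) ^ 2)) * (y ^ (p.2 ^ 2) - y ^ ((p.2 + 1) ^ 2))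
      else 0) ∧
    (1 + (∑' j : ℤ, (-1 : ℂ) ^ j * x ^ (j ^ 2)) * (∑' k : ℤ, (-1 : ℂ) ^ k * y ^ (k ^ 2))) / 2
      = ∑' p : ℕ × ℕ,
          if p.1 % 2 = p.2 % 2 then
            (x ^ (p.1 ^ 2) - x ^ ((p.1 + 1) ^ 2)) * (y ^ (p.2 ^ 2) - y ^ ((p.2 + 1) ^ 2))
          else 0 := by
  have h_theta_x := hasSum_int_neg_one_zpow_mul_zpow_sq hx
  have h_theta_y := hasSum_int_neg_one_zpow_mul_zpow_sq hy
  have h_double := hasSum_ite_mod_two_eq_mul (summable_norm_pow_sq_sub_pow_succ_sq hx)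
    (summable_norm_pow_sq_sub_pow_succ_sq hy)
  refine ⟨h_theta_x.summable, h_theta_y.summable, h_double.summable, ?_⟩
  rw [h_double.tsum_eq, (hasSum_pow_sq_sub_pow_succ_sq hx).tsum_eq,
    (hasSum_pow_sq_sub_pow_succ_sq hy).tsum_eq, h_theta_x.tsum_eq, h_theta_y.tsum_eq, one_mul]
end

section
/- Let u and v be coprime positive integers, set r = √(u/v), and let y > 0 be real. For (m,w) ∈ ℤ×ℤ set p_L = m/r + w·r and p_R = m/r − w·r. Then the function T ↦ Σ_{(m,w)∈ℤ×ℤ} exp(−(π/2)(T·p_L² + y·p_R²)) tends to Σ_{n∈ℤ} exp(−2π·u·v·y·n²) as the real variable T tends to +∞. -/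
/-!
Write the summand as `exp (-T q p) * w p` with `q = (π/2) p_L² ≥ 0` and `w = exp (-(π/2) y p_R²)`.
At `T = y` the sum factors into two Gaussian sums over `ℤ`, so dominated convergence applies and,
as `T → ∞`, only the terms with `p_L = 0` survive. For `r² = u/v` these are the multiples
`n (u, -v)`, since `u, v` are coprime, and on them `p_R² = 4uv n²`.
-/

open Real Filter Topology

lemma summable_exp_neg_mul_int_sq {a : ℝ} (ha : 0 < a) :
    Summable fun n : ℤ => exp (-a * n ^ 2) := by
  have h := summable_pow_mul_jacobiTheta₂_term_bound 0 (div_pos ha pi_pos) 0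
  refine h.congr fun n => ?_
  field_simp
  ring_nf

theorem tendsto_tsum_exp_neg_mul_mul {ι : Type*} {q w : ι → ℝ} (hq : ∀ i, 0 ≤ q i)
    (hw : ∀ i, 0 ≤ w i) {T₀ : ℝ} (hs : Summable fun i => exp (-(T₀ * q i)) * w i) :
    Tendsto (fun T => ∑' i, exp (-(T * q i)) * w i) atTop (𝓝 (∑' i : {i // q i = 0}, w i)) := by
  rw [show (∑' i : {i // q i = 0}, w i) = _ from tsum_subtype {i | q i = 0} w]
  refine tendsto_tsum_of_dominated_convergence hs (fun i => ?_) ?_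
  · by_cases hqi : q i = 0
    · simp [hqi]
    · have hpos : 0 < q i := (hq i).lt_of_ne' hqi
      have hexp : Tendsto (fun T => exp (-(T * q i))) atTop (𝓝 0) :=
        tendsto_exp_neg_atTop_nhds_zero.comp (tendsto_id.atTop_mul_const hpos)
      simpa [hqi] using hexp.mul_const (w i)
  · filter_upwards [eventually_ge_atTop T₀] with T hT i
    rw [Real.norm_of_nonneg (by positivity [hw i])]
    gcongr
    · exact hw i
    · exact hq i

lemma IsCoprime.bijective_mul_neg_mul {u v : ℤ} (h : IsCoprime u v) :
    Function.Bijective fun n : ℤ =>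
      (⟨(n * u, -(n * v)), by ring⟩ : {p : ℤ × ℤ // p.1 * v + p.2 * u = 0}) := by
  obtain ⟨a, b, hab⟩ := h
  -- `p ↦ a p.1 - b p.2` is a two-sided inverse, by Bézout `a u + b v = 1`
  refine Function.bijective_iff_has_inverse.2 ⟨fun p => a * p.1.1 - b * p.1.2, ?_, ?_⟩
  · intro n
    linear_combination n * hab
  · rintro ⟨⟨m, w⟩, hmw⟩
    ext
    · linear_combination m * hab - b * hmw
    · linear_combination w * hab - a * hmw

section Momenta

variable {r : ℝ}

lemma summable_exp_neg_momenta (hr : r ≠ 0) {y : ℝ} (hy : 0 < y) :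
    Summable fun p : ℤ × ℤ =>
      exp (-(π / 2) * (y * (p.1 / r + p.2 * r) ^ 2 + y * (p.1 / r - p.2 * r) ^ 2)) := by
  have hm := summable_exp_neg_mul_int_sq (a := π * y / r ^ 2) (by positivity)
  have hw := summable_exp_neg_mul_int_sq (a := π * y * r ^ 2) (by positivity)
  refine (hm.mul_of_nonneg hw (fun _ => (exp_pos _).le) (fun _ => (exp_pos _).le)).congr
    fun p => ?_
  rw [← exp_add]
  congr 1
  field_simp
  ring

variable {u v : ℝ}

lemma div_add_mul_eq_zero_iff (hr : r ≠ 0) (hv : v ≠ 0) (hr2 : r ^ 2 = u / v) {m w : ℝ} :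
    m / r + w * r = 0 ↔ m * v + w * u = 0 := by
  have h : m / r + w * r = (m * v + w * u) / (v * r) := by
    rw [show u = r ^ 2 * v by rw [hr2]; field_simp]
    field_simp
  rw [h, div_eq_zero_iff]
  simp [hr, hv]

lemma mul_div_sub_neg_mul_mul_sq (hr : r ≠ 0) (hv : v ≠ 0) (hr2 : r ^ 2 = u / v) (n : ℝ) :
    (n * u / r - -(n * v) * r) ^ 2 = 4 * u * v * n ^ 2 := by
  rw [show u = r ^ 2 * v by rw [hr2]; field_simp]
  field_simp
  ring

end Momenta

/-- At rational `r² = u/v` (with `u, v` coprime), the solitonic sum over the Narain lattice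
projects in the `T → ∞` limit onto the `p_L = 0` sublattice, giving `Σ_n e^{-2π u v y n²}`. -/
theorem stmt_13 (u v : ℕ) (hu : 0 < u) (hv : 0 < v) (huv : Nat.Coprime u v)
    (r : ℝ) (hr : r = Real.sqrt ((u : ℝ) / (v : ℝ))) (y : ℝ) (hy : 0 < y) :
    Filter.Tendsto
      (fun T : ℝ => ∑' p : ℤ × ℤ,
        Real.exp (-(Real.pi / 2) *
          (T * ((p.1 : ℝ) / r + (p.2 : ℝ) * r) ^ 2 + y * ((p.1 : ℝ) / r - (p.2 : ℝ) * r) ^ 2)))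
      Filter.atTop
      (nhds (∑' n : ℤ, Real.exp (-(2 * Real.pi * (u : ℝ) * (v : ℝ) * y) * (n : ℝ) ^ 2))) := by
  have hv0 : (v : ℝ) ≠ 0 := by positivity
  have hr0 : r ≠ 0 := by rw [hr]; positivity
  have hr2 : r ^ 2 = u / v := by rw [hr, sq_sqrt (by positivity)]
  set q : ℤ × ℤ → ℝ := fun p => π / 2 * (p.1 / r + p.2 * r) ^ 2
  set w : ℤ × ℤ → ℝ := fun p => exp (-(π / 2) * (y * (p.1 / r - p.2 * r) ^ 2))
  have hsplit (T : ℝ) (p : ℤ × ℤ) :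
      exp (-(π / 2) * (T * (p.1 / r + p.2 * r) ^ 2 + y * (p.1 / r - p.2 * r) ^ 2)) =
        exp (-(T * q p)) * w p := by
    simp only [q, w, ← exp_add]
    ring_nf
  simp_rw [hsplit]
  have hlim := tendsto_tsum_exp_neg_mul_mul (q := q) (w := w) (fun p => by positivity)
    (fun p => by positivity) ((summable_exp_neg_momenta hr0 hy).congr (hsplit y))
  have hker (p : ℤ × ℤ) : q p = 0 ↔ p.1 * (v : ℤ) + p.2 * u = 0 := by
    simp only [q, mul_eq_zero, pow_eq_zero_iff two_ne_zero,
      div_add_mul_eq_zero_iff hr0 hv0 hr2]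
    norm_cast
    simp
  let e : ℤ ≃ {p // q p = 0} :=
    (Equiv.ofBijective _ (Nat.isCoprime_iff_coprime.2 huv).bijective_mul_neg_mul).trans
      (Equiv.subtypeEquivRight hker).symm
  convert hlim using 2
  rw [← e.tsum_eq]
  refine tsum_congr fun n => congrArg exp ?_
  change _ = -(π / 2) * (y * (((n * u : ℤ) : ℝ) / r - ((-(n * v) : ℤ) : ℝ) * r) ^ 2)
  push_cast
  rw [mul_div_sub_neg_mul_mul_sq hr0 hv0 hr2]
  ring
end

section
/- Let r > 0 be a real number such that r² is irrational, and let y > 0 be real. For (m,w) ∈ ℤ×ℤ set p_L = m/r + w·r and p_R = m/r − w·r. Then the function T ↦ Σ_{(m,w)∈ℤ×ℤ} exp(−(π/2)(T·p_L² + y·p_R²)) tends to 1 as the real variable T tends to +∞. -/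
/-!
For `T ≥ 1` every term is dominated by the Gaussian `exp (-π c (m² / r² + w² r²))`, `c = min 1 y`,
because `p_L² + p_R² = 2 (m² / r² + w² r²)`; this is summable over `ℤ × ℤ`. Pointwise, the term at
`(0, 0)` is `1`, and every other term tends to `0`, since `p_L = 0` means `m + w r² = 0`, which
forces `m = w = 0` when `r²` is irrational. Dominated convergence concludes.
-/

open Filter Real Topology

noncomputable section

theorem tendsto_tsum_of_dominated_of_tendsto_single {α β G : Type*} {𝓕 : Filter α}
    [NormedAddCommGroup G] [CompleteSpace G] [DecidableEq β]
    {f : α → β → G} {bound : β → ℝ} (b₀ : β) {c : G} (h_sum : Summable bound)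
    (h₀ : Tendsto (f · b₀) 𝓕 (𝓝 c)) (h_ne : ∀ b ≠ b₀, Tendsto (f · b) 𝓕 (𝓝 0))
    (h_bound : ∀ᶠ n in 𝓕, ∀ k, ‖f n k‖ ≤ bound k) :
    Tendsto (∑' k, f · k) 𝓕 (𝓝 c) := by
  have hlim : ∀ b, Tendsto (f · b) 𝓕 (𝓝 (if b = b₀ then c else 0)) := fun b => by
    split_ifs with hb
    · exact hb ▸ h₀
    · exact h_ne b hb
  simpa only [tsum_ite_eq] using tendsto_tsum_of_dominated_convergence h_sum hlim h_bound

theorem summable_int_exp_neg_mul_sq {c : ℝ} (hc : 0 < c) :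
    Summable fun n : ℤ => exp (-c * n ^ 2) := by
  refine (summable_pow_mul_jacobiTheta₂_term_bound 0 (div_pos hc pi_pos) 0).congr fun n => ?_
  simp only [pow_zero, one_mul, mul_zero, zero_mul, sub_zero]
  congr 1
  field_simp

theorem summable_int_prod_exp_neg_mul_sq {a b : ℝ} (ha : 0 < a) (hb : 0 < b) :
    Summable fun p : ℤ × ℤ => exp (-a * p.1 ^ 2) * exp (-b * p.2 ^ 2) :=
  (summable_int_exp_neg_mul_sq ha).mul_of_nonneg (summable_int_exp_neg_mul_sq hb)
    (fun _ => (exp_pos _).le) (fun _ => (exp_pos _).le)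

theorem Irrational.eq_zero_of_int_add_int_mul_eq_zero {x : ℝ} (hx : Irrational x) {m n : ℤ}
    (h : (m : ℝ) + n * x = 0) : m = 0 ∧ n = 0 := by
  obtain rfl | hn := eq_or_ne n 0
  · exact ⟨by simpa using h, rfl⟩
  · exact absurd h ((hx.intCast_mul hn).intCast_add m).ne_zero

def leftMomentum (r : ℝ) (p : ℤ × ℤ) : ℝ := p.1 / r + p.2 * r

def rightMomentum (r : ℝ) (p : ℤ × ℤ) : ℝ := p.1 / r - p.2 * r

theorem leftMomentum_ne_zero {r : ℝ} (hirr : Irrational (r ^ 2)) {p : ℤ × ℤ} (hp : p ≠ 0) :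
    leftMomentum r p ≠ 0 := by
  intro h
  have hr : r ≠ 0 := by rintro rfl; simp at hirr
  have hlin : (p.1 : ℝ) + p.2 * r ^ 2 = 0 := by
    rw [leftMomentum, div_add' _ _ _ hr, div_eq_zero_iff] at h
    linear_combination h.resolve_right hr
  obtain ⟨h₁, h₂⟩ := hirr.eq_zero_of_int_add_int_mul_eq_zero hlin
  exact hp (Prod.ext h₁ h₂)

theorem leftMomentum_sq_add_rightMomentum_sq {r : ℝ} (hr : r ≠ 0) (p : ℤ × ℤ) :
    leftMomentum r p ^ 2 + rightMomentum r p ^ 2 = 2 * (p.1 ^ 2 / r ^ 2 + p.2 ^ 2 * r ^ 2) := by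
  simp only [leftMomentum, rightMomentum]
  field_simp
  ring

def solitonTerm (r y T : ℝ) (p : ℤ × ℤ) : ℝ :=
  exp (-(π / 2) * (T * leftMomentum r p ^ 2 + y * rightMomentum r p ^ 2))

theorem solitonTerm_zero (r y T : ℝ) : solitonTerm r y T 0 = 1 := by
  simp [solitonTerm, leftMomentum, rightMomentum]

theorem tendsto_solitonTerm_atTop {r y : ℝ} {p : ℤ × ℤ} (hp : leftMomentum r p ≠ 0) :
    Tendsto (fun T => solitonTerm r y T p) atTop (𝓝 0) := by
  have hexp : Tendsto (fun T => T * leftMomentum r p ^ 2 + y * rightMomentum r p ^ 2)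
      atTop atTop :=
    tendsto_atTop_add_const_right _ _ (tendsto_id.atTop_mul_const (by positivity))
  exact tendsto_exp_atBot.comp
    ((tendsto_const_mul_atBot_of_neg (by linarith [pi_pos])).2 hexp)

theorem solitonTerm_le {r y T c : ℝ} (hr : r ≠ 0) (hcT : c ≤ T) (hcy : c ≤ y) (p : ℤ × ℤ) :
    solitonTerm r y T p ≤ exp (-(π * c / r ^ 2) * p.1 ^ 2) * exp (-(π * c * r ^ 2) * p.2 ^ 2) := by
  have hquad : c * (leftMomentum r p ^ 2 + rightMomentum r p ^ 2) ≤
      T * leftMomentum r p ^ 2 + y * rightMomentum r p ^ 2 := by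
    rw [mul_add]
    gcongr
  rw [← exp_add, solitonTerm, exp_le_exp]
  calc -(π / 2) * (T * leftMomentum r p ^ 2 + y * rightMomentum r p ^ 2)
      ≤ -(π / 2) * (c * (leftMomentum r p ^ 2 + rightMomentum r p ^ 2)) :=
        mul_le_mul_of_nonpos_left hquad (by linarith [pi_pos])
    _ = -(π * c / r ^ 2) * p.1 ^ 2 + -(π * c * r ^ 2) * p.2 ^ 2 := by
        rw [leftMomentum_sq_add_rightMomentum_sq hr]
        field_simp
        ring

end

/-- At irrational `r²`, the solitonic sum over the Narain lattice projects in the `T → ∞`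
limit onto the single lattice point `(m, w) = (0, 0)`, giving `1`. -/
theorem stmt_14 (r : ℝ) (hr : 0 < r) (hirr : Irrational (r ^ 2)) (y : ℝ) (hy : 0 < y) :
    Filter.Tendsto
      (fun T : ℝ => ∑' p : ℤ × ℤ,
        Real.exp (-(Real.pi / 2) *
          (T * ((p.1 : ℝ) / r + (p.2 : ℝ) * r) ^ 2 + y * ((p.1 : ℝ) / r - (p.2 : ℝ) * r) ^ 2)))
      Filter.atTop (nhds 1) := by
  refine tendsto_tsum_of_dominated_of_tendsto_single (f := solitonTerm r y) 0
    (summable_int_prod_exp_neg_mul_sq (a := π * min 1 y / r ^ 2) (b := π * min 1 y * r ^ 2)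
      (by positivity) (by positivity))
    (by simp only [solitonTerm_zero, tendsto_const_nhds])
    (fun p hp => tendsto_solitonTerm_atTop (leftMomentum_ne_zero hirr hp)) ?_
  filter_upwards [eventually_ge_atTop 1] with T hT p
  exact (norm_of_nonneg (exp_pos _).le).trans_le
    (solitonTerm_le hr.ne' ((min_le_left 1 y).trans hT) (min_le_right 1 y) p)
end
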